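/- Let K be a field and let V, U, W, V' be finite-dimensional K-vector spaces. Let θ : V → W and β : U → W be injective linear maps, let η : W → V' be a surjective linear map with ker η = im β, and set γ := η ∘ θ. Suppose T_V : V → V, T_U : U → U and T_W : W → W are linear automorphisms satisfying θ ∘ T_V = T_W ∘ θ and β ∘ T_U = T_W ∘ β. If dim_K U = 1 + dim_K V and trace(T_V) = trace(T_U), then γ is not the zero map; consequently dim_K (ker γ) < dim_K V and dim_K (V'/im γ) < dim_K V'. -/

import Mathlib

/-!
If `γ = η ∘ θ` vanished, `θ` would land in `ker η = im β` and so factor as `β ∘ φ` with `φ : V → U`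
injective and intertwining `T_V` with `T_U`. Then `T_U` preserves the hyperplane `im φ ≅ V` and acts
on the line `U / im φ` by a scalar `c`, nonzero because `T_U` is onto; hence
`trace T_U = trace T_V + c ≠ trace T_V`.
-/

open Module

namespace Submodule

theorem exists_sub_smul_mem_of_finrank_eq_succ
    {K U : Type*} [Field K] [AddCommGroup U] [Module K U] [FiniteDimensional K U]
    {p : Submodule K U} (hp : finrank K U = finrank K p + 1)
    {f : U →ₗ[K] U} (hf : ∀ x ∈ p, f x ∈ p) :
    ∃ c : K, ∀ x, f x - c • x ∈ p := by
  have h1 : finrank K (U ⧸ p) = 1 := by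
    have := p.finrank_quotient_add_finrank; omega
  obtain ⟨c, hc, -⟩ := (p.mapQ p f hf).existsUnique_eq_smul_id_of_finrank_eq_one h1
  refine ⟨c, fun x ↦ (Quotient.eq p).mp ?_⟩
  simpa using LinearMap.congr_fun hc (Quotient.mk x)

end Submodule

namespace LinearMap

theorem trace_sub_smul_finrank_eq_trace_restrict
    {R M : Type*} [CommRing R] [IsDomain R] [IsPrincipalIdealRing R]
    [AddCommGroup M] [Module R M] [Module.Free R M] [Module.Finite R M]
    {f : M →ₗ[R] M} {p : Submodule R M} (hf : ∀ x ∈ p, f x ∈ p) {c : R}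
    (hc : ∀ x, f x - c • x ∈ p) :
    trace R M f - c * finrank R M = trace R p (f.restrict hf) - c * finrank R p := by
  have h := trace_restrict_eq_of_forall_mem p (f - c • 1) hc
  rw [← restrict_sub hf (fun _ hx ↦ p.smul_mem c hx), restrict_smul_one] at h
  simpa only [map_sub, map_smul, trace_one, smul_eq_mul] using h.symm

theorem trace_restrict_range_eq_of_comp_eq
    {K V U : Type*} [Field K] [AddCommGroup V] [Module K V] [AddCommGroup U] [Module K U]
    {φ : V →ₗ[K] U} (hφ : Function.Injective φ) {TV : V →ₗ[K] V} {TU : U →ₗ[K] U}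
    (hcomm : φ ∘ₗ TV = TU ∘ₗ φ) (h : ∀ x ∈ range φ, TU x ∈ range φ) :
    trace K (range φ) (TU.restrict h) = trace K V TV := by
  set e := LinearEquiv.ofInjective φ hφ
  suffices TU.restrict h = e.conj TV by rw [this, trace_conj']
  rw [LinearEquiv.conj_apply, ← LinearEquiv.comp_toLinearMap_symm_eq]
  ext v
  exact (LinearMap.congr_fun hcomm v).symm

theorem trace_ne_of_injective_of_comp_eq
    {K V U : Type*} [Field K] [AddCommGroup V] [Module K V] [FiniteDimensional K V]
    [AddCommGroup U] [Module K U] [FiniteDimensional K U]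
    {φ : V →ₗ[K] U} (hφ : Function.Injective φ) {TV : V →ₗ[K] V} {TU : U →ₗ[K] U}
    (hcomm : φ ∘ₗ TV = TU ∘ₗ φ) (hTU : Function.Surjective TU)
    (hdim : finrank K U = finrank K V + 1) :
    trace K V TV ≠ trace K U TU := by
  have hmaps : ∀ x ∈ range φ, TU x ∈ range φ := by
    rintro _ ⟨v, rfl⟩
    exact ⟨TV v, LinearMap.congr_fun hcomm v⟩
  have hrank : finrank K (range φ) = finrank K V := finrank_range_of_inj hφ
  obtain ⟨c, hc⟩ := (range φ).exists_sub_smul_mem_of_finrank_eq_succ (hrank ▸ hdim) hmaps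
  -- if `c = 0` then `TU` would map `U` into the proper subspace `range φ`
  have hc0 : c ≠ 0 := by
    rintro rfl
    have htop : range φ = ⊤ := by
      refine eq_top_iff.mpr fun u _ ↦ ?_
      obtain ⟨u', rfl⟩ := hTU u
      simpa using hc u'
    have := finrank_top K U
    rw [← htop, hrank] at this
    omega
  have htr := trace_sub_smul_finrank_eq_trace_restrict hmaps hc
  rw [trace_restrict_range_eq_of_comp_eq hφ hcomm, hdim, hrank] at htr
  push_cast at htr
  have htrace : trace K U TU = trace K V TV + c := by linear_combination htr
  simpa [htrace] using hc0

theorem exists_comp_eq_of_range_le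
    {K V U W : Type*} [Field K] [AddCommGroup V] [Module K V] [AddCommGroup U] [Module K U]
    [AddCommGroup W] [Module K W] {β : U →ₗ[K] W} (hβ : Function.Injective β) {θ : V →ₗ[K] W}
    (h : range θ ≤ range β) : ∃ φ : V →ₗ[K] U, β ∘ₗ φ = θ := by
  obtain ⟨g, hg⟩ := β.exists_leftInverse_of_injective (ker_eq_bot.mpr hβ)
  refine ⟨g ∘ₗ θ, ext fun v ↦ ?_⟩
  obtain ⟨u, hu⟩ := h ⟨v, rfl⟩
  simp [← hu, ← comp_apply g β, hg]

theorem finrank_ker_lt_of_ne_zero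
    {K V V' : Type*} [Field K] [AddCommGroup V] [Module K V] [FiniteDimensional K V]
    [AddCommGroup V'] [Module K V'] {γ : V →ₗ[K] V'} (hγ : γ ≠ 0) :
    finrank K (ker γ) < finrank K V :=
  Submodule.finrank_lt fun h ↦ hγ (ker_eq_top.mp h)

theorem finrank_quotient_range_lt_of_ne_zero
    {K V V' : Type*} [Field K] [AddCommGroup V] [Module K V] [FiniteDimensional K V]
    [AddCommGroup V'] [Module K V'] [FiniteDimensional K V'] {γ : V →ₗ[K] V'} (hγ : γ ≠ 0) :
    finrank K (V' ⧸ range γ) < finrank K V' := by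
  have hpos : 1 ≤ finrank K (range γ) :=
    Submodule.one_le_finrank_iff.mpr fun h ↦ hγ (range_eq_bot.mp h)
  have := (range γ).finrank_quotient_add_finrank
  omega
end LinearMap

theorem stmt0_general {K : Type*} [Field K]
    {V U W V' : Type*}
    [AddCommGroup V] [Module K V] [FiniteDimensional K V]
    [AddCommGroup U] [Module K U] [FiniteDimensional K U]
    [AddCommGroup W] [Module K W]
    [AddCommGroup V'] [Module K V'] [FiniteDimensional K V']
    (θ : V →ₗ[K] W) (β : U →ₗ[K] W) (η : W →ₗ[K] V')
    (hθ : Function.Injective θ) (hβ : Function.Injective β)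
    (hker : LinearMap.ker η = LinearMap.range β)
    (γ : V →ₗ[K] V') (hγ : γ = η ∘ₗ θ)
    (TV : V →ₗ[K] V) (TU : U →ₗ[K] U) (TW : W →ₗ[K] W)
    (hTU : Function.Bijective TU)
    (hcomm1 : θ ∘ₗ TV = TW ∘ₗ θ) (hcomm2 : β ∘ₗ TU = TW ∘ₗ β)
    (hdim : Module.finrank K U = 1 + Module.finrank K V)
    (htr : LinearMap.trace K V TV = LinearMap.trace K U TU) :
    γ ≠ 0 ∧
      Module.finrank K (LinearMap.ker γ) < Module.finrank K V ∧
      Module.finrank K (V' ⧸ LinearMap.range γ) < Module.finrank K V' := by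
  have hγ0 : γ ≠ 0 := by
    intro h0
    have hle : LinearMap.range θ ≤ LinearMap.range β :=
      hker ▸ LinearMap.range_le_ker_iff.mpr (hγ ▸ h0)
    obtain ⟨φ, rfl⟩ := LinearMap.exists_comp_eq_of_range_le hβ hle
    have hφ : Function.Injective φ := by
      rw [LinearMap.coe_comp] at hθ
      exact hθ.of_comp
    have hcomm : φ ∘ₗ TV = TU ∘ₗ φ := by
      refine LinearMap.ext fun v ↦ hβ ?_
      simpa using (LinearMap.congr_fun hcomm1 v).trans (LinearMap.congr_fun hcomm2 (φ v)).symm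
    exact LinearMap.trace_ne_of_injective_of_comp_eq hφ hcomm hTU.2 (by omega) htr
  exact ⟨hγ0, LinearMap.finrank_ker_lt_of_ne_zero hγ0,
    LinearMap.finrank_quotient_range_lt_of_ne_zero hγ0⟩

/-- The linear-algebra content of Theorem 3.3: if `θ : V → W` and `β : U → W` are injective,
`η : W → V'` is surjective with `ker η = im β`, `γ = η ∘ θ`, the automorphisms `T_V, T_U, T_W`
commute with `θ` and `β`, `dim U = 1 + dim V`, and `trace T_V = trace T_U`, then `γ ≠ 0`,
`dim (ker γ) < dim V`, and `dim (V'/im γ) < dim V'`. -/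
theorem stmt0 {K : Type*} [Field K]
    {V U W V' : Type*}
    [AddCommGroup V] [Module K V] [FiniteDimensional K V]
    [AddCommGroup U] [Module K U] [FiniteDimensional K U]
    [AddCommGroup W] [Module K W] [FiniteDimensional K W]
    [AddCommGroup V'] [Module K V'] [FiniteDimensional K V']
    (θ : V →ₗ[K] W) (β : U →ₗ[K] W) (η : W →ₗ[K] V')
    (hθ : Function.Injective θ) (hβ : Function.Injective β)
    (hη : Function.Surjective η) (hker : LinearMap.ker η = LinearMap.range β)
    (γ : V →ₗ[K] V') (hγ : γ = η ∘ₗ θ)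
    (TV : V →ₗ[K] V) (TU : U →ₗ[K] U) (TW : W →ₗ[K] W)
    (hTV : Function.Bijective TV) (hTU : Function.Bijective TU)
    (hTW : Function.Bijective TW)
    (hcomm1 : θ ∘ₗ TV = TW ∘ₗ θ) (hcomm2 : β ∘ₗ TU = TW ∘ₗ β)
    (hdim : Module.finrank K U = 1 + Module.finrank K V)
    (htr : LinearMap.trace K V TV = LinearMap.trace K U TU) :
    γ ≠ 0 ∧
      Module.finrank K (LinearMap.ker γ) < Module.finrank K V ∧
      Module.finrank K (V' ⧸ LinearMap.range γ) < Module.finrank K V' :=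
  stmt0_general θ β η hθ hβ hker γ hγ TV TU TW hTU hcomm1 hcomm2 hdim htr
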